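/- If N ≥ 2, 1 ≤ n ≤ N, and ā = (a_2,…,a_N) and ā' = (a'_2,…,a'_N) are two tuples with a_i, a'_i ∈ {1,…,i} for each i that differ in exactly one coordinate, then, writing π(ā) = (N,a_N) ∘ ⋯ ∘ (2,a_2) and π(ā') = (N,a'_N) ∘ ⋯ ∘ (2,a'_2) for the corresponding compositions of transpositions of {1,…,N}, the permutations π(ā) and π(ā') differ on at most 3 points of {1,…,N}; consequently the tuples (π(ā)(N), π(ā)(N−1), …, π(ā)(N−n+1)) and (π(ā')(N), π(ā')(N−1), …, π(ā')(N−n+1)) differ in at most 3 coordinates (Hamming distance at most 3). -/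

import Mathlib

/-!
Since `ā` and `ā'` differ only in the coordinate `i`, the two compositions share every factor
except the `i`-th one, so `π(ā')⁻¹ ∘ π(ā)` is conjugate to `(i, a'_i) ∘ (i, a_i)`. Two
transpositions sharing the point `i` move at most the three points `i, a_i, a'_i`, and
conjugation preserves the number of moved points. The points where `π(ā)` and `π(ā')`
disagree are exactly those moved by `π(ā')⁻¹ ∘ π(ā)`, and the second claim only looks at
some of these points.
-/

open scoped Classical

/- Everything is `0`-indexed: `a i` stands for `a_{i+1} - 1` (the factor at `i = 0` is the
identity), and `π(N - j)` for `j = 0, …, n - 1` is `π ⟨N - 1 - j, _⟩`. -/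
noncomputable def fisherYates (N : ℕ) (a : ∀ i : Fin N, Fin (i.1 + 1)) :
    Equiv.Perm (Fin N) :=
  (List.ofFn (fun i : Fin N => Equiv.swap i (Fin.castLE i.2 (a i)))).reverse.prod

namespace List

theorem prod_reverse_ofFn_update {M : Type*} [Monoid M] {N : ℕ} (f : Fin N → M) (i : Fin N)
    (x : M) :
    (ofFn (Function.update f i x)).reverse.prod =
      ((ofFn f).drop (i + 1)).reverse.prod * x * ((ofFn f).take i).reverse.prod := by
  have hset : ofFn (Function.update f i x) = (ofFn f).set i x := by
    refine ext_getElem (by simp) fun k _ _ => ?_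
    simp [getElem_set, Function.update_apply, Fin.ext_iff, eq_comm]
  rw [hset, set_eq_take_append_cons_drop]
  simp [mul_assoc]

theorem exists_inv_prod_reverse_ofFn_mul_eq_conj {G : Type*} [Group G] {N : ℕ}
    {f g : Fin N → G} {i : Fin N} (h : ∀ j, j ≠ i → f j = g j) :
    ∃ P : G, ((ofFn g).reverse.prod)⁻¹ * (ofFn f).reverse.prod = P * ((g i)⁻¹ * f i) * P⁻¹ := by
  have hg : g = Function.update f i (g i) := by
    funext j
    by_cases hj : j = i
    · subst hj; simp
    · simp [hj, h j hj]
  refine ⟨((ofFn f).take i).reverse.prod⁻¹, ?_⟩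
  rw [hg, ← Function.update_eq_self i f, prod_reverse_ofFn_update, prod_reverse_ofFn_update]
  simp [mul_assoc]

end List

namespace Equiv.Perm

variable {α : Type*} [Fintype α] [DecidableEq α]

theorem filter_apply_ne_eq_support_inv_mul (σ τ : Perm α) :
    Finset.univ.filter (fun x => σ x ≠ τ x) = (τ⁻¹ * σ).support := by
  ext x
  simp [Equiv.eq_symm_apply, eq_comm]

theorem card_support_swap_mul_swap_le (x y z : α) : (swap x y * swap x z).support.card ≤ 3 := by
  refine (Finset.card_le_card (t := {x, y, z}) fun w hw => ?_).trans Finset.card_le_three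
  by_contra hw'
  simp only [Finset.mem_insert, Finset.mem_singleton, not_or] at hw'
  obtain ⟨hx, hy, hz⟩ := hw'
  simp [mem_support, swap_apply_of_ne_of_ne, hx, hy, hz] at hw

end Equiv.Perm

theorem Finset.card_filter_comp_le_of_injective {α β : Type*} [Fintype α] [Fintype β]
    {e : α → β} (he : Function.Injective e) (p : β → Prop) [DecidablePred p] :
    (univ.filter fun a => p (e a)).card ≤ (univ.filter p).card :=
  card_le_card_of_injOn e (fun a ha => by simpa using ha) he.injOn

theorem fisher_yates_single_coordinate_sensitivity (N n : ℕ) (hnN : n ≤ N)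
    (a a' : ∀ i : Fin N, Fin (i.1 + 1))
    (hdiff : ∃ i : Fin N, a i ≠ a' i ∧ ∀ j : Fin N, j ≠ i → a j = a' j) :
    (Finset.univ.filter
        (fun x : Fin N => fisherYates N a x ≠ fisherYates N a' x)).card ≤ 3
    ∧ (Finset.univ.filter
        (fun j : Fin n =>
          fisherYates N a ⟨N - 1 - j.1, by omega⟩ ≠
            fisherYates N a' ⟨N - 1 - j.1, by omega⟩)).card ≤ 3 := by
  obtain ⟨i, -, hoff⟩ := hdiff
  obtain ⟨P, hP⟩ := List.exists_inv_prod_reverse_ofFn_mul_eq_conj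
    (f := fun j : Fin N => Equiv.swap j (Fin.castLE j.2 (a j)))
    (g := fun j : Fin N => Equiv.swap j (Fin.castLE j.2 (a' j))) (i := i)
    (fun j hj => by rw [hoff j hj])
  have hpoints : (Finset.univ.filter
      (fun x : Fin N => fisherYates N a x ≠ fisherYates N a' x)).card ≤ 3 := by
    rw [Equiv.Perm.filter_apply_ne_eq_support_inv_mul, fisherYates, fisherYates, hP,
      Equiv.Perm.card_support_conj, Equiv.swap_inv]
    exact Equiv.Perm.card_support_swap_mul_swap_le _ _ _
  have hrev : Function.Injective fun j : Fin n => (⟨N - 1 - j.1, by omega⟩ : Fin N) :=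
    fun j k hjk => Fin.ext (by simp only [Fin.mk.injEq] at hjk; omega)
  exact ⟨hpoints, (Finset.card_filter_comp_le_of_injective hrev _).trans hpoints⟩
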